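/- For the K×K covariance matrix Σ with Σ_{ii}=1, Σ_{1j}=Σ_{j1}=ρ for j≥2, and Σ_{ij}=ρ^{min(i,j)} for 2≤i≠j≤K, the MSE of arm i, defined as E_i = Σ_{j≠i} (1 − Σ_{ij}²), satisfies E_1 ≤ E_2 ≤ ... ≤ E_K, for any 0 ≤ ρ ≤ 1. -/

import Mathlib

theorem Finset.sum_erase_le_sum_erase {ι M : Type*} [DecidableEq ι] [AddCommGroup M]
    [PartialOrder M] [IsOrderedAddMonoid M] {s : Finset ι} {f g : ι → M} {i j : ι}
    (hi : i ∈ s) (hj : j ∈ s) (hfij : f i = f j) (hfg : ∀ k ∈ s, f k ≤ g k) :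
    ∑ k ∈ s.erase i, f k ≤ ∑ k ∈ s.erase j, g k :=
  calc ∑ k ∈ s.erase i, f k = ∑ k ∈ s.erase j, f k := by
        rw [Finset.sum_erase_eq_sub hi, Finset.sum_erase_eq_sub hj, hfij]
    _ ≤ ∑ k ∈ s.erase j, g k :=
        Finset.sum_le_sum fun k hk => hfg k (Finset.mem_of_mem_erase hk)

theorem sq_pow_le_sq_pow_of_le_one {ρ : ℝ} (h0 : 0 ≤ ρ) (h1 : ρ ≤ 1) {m n : ℕ} (hmn : m ≤ n) :
    (ρ ^ n) ^ 2 ≤ (ρ ^ m) ^ 2 :=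
  pow_le_pow_left₀ (pow_nonneg h0 n) (pow_le_pow_of_le_one h0 h1 hmn) 2

theorem mse_ordered_general (K : ℕ) (ρ : ℝ) (h0 : 0 ≤ ρ) (h1 : ρ ≤ 1)
    (E : ℕ → ℝ)
    (hE : ∀ i ∈ Finset.Icc 1 K,
      E i = ∑ j ∈ (Finset.Icc 1 K).erase i, (1 - (ρ ^ min i j) ^ 2)) :
    ∀ i ∈ Finset.Icc 1 K, ∀ j ∈ Finset.Icc 1 K, i ≤ j → E i ≤ E j := by
  intro i hi j hj hij
  rw [hE i hi, hE j hj]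
  -- Removing the `i`-th or the `j`-th term from row `i` removes the same value `1 - ρ^{2i}`.
  refine Finset.sum_erase_le_sum_erase hi hj (by rw [min_self, min_eq_left hij]) fun k _ => ?_
  exact sub_le_sub_left (sq_pow_le_sq_pow_of_le_one h0 h1 (min_le_min_right k hij)) 1

/-- For the covariance matrix with unit variances and correlations
`ρ_{ij} = ρ^{min(i,j)}` for `i ≠ j` (arms indexed `1,…,K`), the MSEs
`E_i = Σ_{j≠i} (1 − ρ_{ij}²)` are nondecreasing in `i`, for `0 ≤ ρ ≤ 1`. -/
theorem mse_ordered (K : ℕ) (hK : 2 ≤ K) (ρ : ℝ) (h0 : 0 ≤ ρ) (h1 : ρ ≤ 1)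
    (E : ℕ → ℝ)
    (hE : ∀ i ∈ Finset.Icc 1 K,
      E i = ∑ j ∈ (Finset.Icc 1 K).erase i, (1 - (ρ ^ min i j) ^ 2)) :
    ∀ i ∈ Finset.Icc 1 K, ∀ j ∈ Finset.Icc 1 K, i ≤ j → E i ≤ E j :=
  mse_ordered_general K ρ h0 h1 E hE
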